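/- If a tree T on X displays the characters Ω_A, χ2, φ3, χ3 and χ4, then T displays the generalized quartet X_{≤2} ∪ {a3} | a4 ‖ b3 | b4. -/

import Mathlib

namespace PP

/-- A vertex is a leaf (degree at most one) if it has at most one neighbour. -/
def IsLeafVert {V : Type} (G : SimpleGraph V) (w : V) : Prop :=
  ∀ w₁ w₂ : V, G.Adj w w₁ → G.Adj w w₂ → w₁ = w₂

/-- A (finite, unrooted) phylogenetic tree on a label set `X ⊆ L`:
its leaves are bijectively labelled by the elements of `X`. -/
structure PhyloTree {L : Type} (X : Set L) where
  V : Type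
  finV : Finite V
  G : SimpleGraph V
  isTree : G.IsTree
  leaf : L → V
  leaf_injOn : Set.InjOn leaf X
  leaf_isLeaf : ∀ x ∈ X, IsLeafVert G (leaf x)
  leaf_surj : ∀ w, IsLeafVert G w → ∃ x ∈ X, leaf x = w

/-- The vertex set of the minimal subtree `T[S]` spanning the leaves labelled by `S ∩ X`. -/
def subtree {L : Type} {X : Set L} (T : PhyloTree X) (S : Set L) : Set T.V :=
  {w | ∃ x ∈ S ∩ X, ∃ y ∈ S ∩ X,
        ∃ p : T.G.Walk (T.leaf x) (T.leaf y), p.IsPath ∧ w ∈ p.support}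

/-- `T` displays the character `χ` (a state assignment, whose nonempty fibres on `X`
are the states) if the minimal subtrees spanning distinct states are vertex-disjoint. -/
def displays {L : Type} {X : Set L} (T : PhyloTree X) (χ : L → ℕ) : Prop :=
  ∀ s t : ℕ, s ≠ t → Disjoint (subtree T {x | χ x = s}) (subtree T {x | χ x = t})

/-- A set of characters is compatible if some tree on `X` displays all of them. -/
def compatible {L : Type} (X : Set L) (C : Set (L → ℕ)) : Prop :=
  ∃ T : PhyloTree X, ∀ χ ∈ C, displays T χ

/-- Labels: `(false, i)` is `aᵢ`, `(true, i)` is `bᵢ`. -/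
abbrev Lbl : Type := Bool × ℕ

def a (i : ℕ) : Lbl := (false, i)
def b (i : ℕ) : Lbl := (true, i)

/-- `X = {a₁,…,aₙ,b₁,…,bₙ}`. -/
def Xset (n : ℕ) : Set Lbl := {p | 1 ≤ p.2 ∧ p.2 ≤ n}

/-- `X_{≤ i} = {aⱼ, bⱼ : 1 ≤ j ≤ i}`. -/
def XLE (i : ℕ) : Set Lbl := {p | 1 ≤ p.2 ∧ p.2 ≤ i}

/-- χ_j = X_{≤j-2} | a_{j-1} | b_{j-1} | a_j a_{j+1} | b_j b_{j+1} | a_{j+2} | b_{j+2} | X_{≥j+3} -/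
def chi (j : ℕ) : Lbl → ℕ := fun p =>
  if p.2 + 2 ≤ j then 0
  else if p.2 + 1 = j then cond p.1 2 1
  else if p.2 ≤ j + 1 then cond p.1 4 3
  else if p.2 = j + 2 then cond p.1 6 5
  else 7

def phiMain (j i : ℕ) : ℕ :=
  if i < j then 0 else if i = j then 3 else if i = j + 1 then 4 else 5

def phiSide (j i : ℕ) : ℕ :=
  if i + 3 ≤ j then 0 else if i + 2 = j then 1 else if i + 1 = j then 2 else 5

/-- For even j: φ_j = X_{≤j-3}∪{b_{j-2},b_{j-1}} | a_{j-2} | a_{j-1} | b_j | b_{j+1} | {a_j,a_{j+1}}∪X_{≥j+2};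
for odd j the roles of a and b are swapped. -/
def phi (j : ℕ) : Lbl → ℕ := fun p =>
  if j % 2 = 0 then cond p.1 (phiMain j p.2) (phiSide j p.2)
  else cond p.1 (phiSide j p.2) (phiMain j p.2)

/-- Ω_A = a₁b₁b₂ | {a₂} ∪ X_{≥3}. -/
def OmA : Lbl → ℕ := fun p =>
  cond p.1 (if p.2 ≤ 2 then 0 else 1) (if p.2 = 1 then 0 else 1)

/-- Ω_B = X_{≤n-2} ∪ {b_{n-1}} | a_{n-1} aₙ bₙ. -/
def OmB (n : ℕ) : Lbl → ℕ := fun p =>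
  cond p.1 (if p.2 = n then 1 else 0) (if p.2 + 1 ≥ n then 1 else 0)

/-- Deleting vertex `w` separates `S₁` from `S₂`: every path between a leaf of `S₁`
and a leaf of `S₂` passes through `w`. -/
def vertexSep {L : Type} {X : Set L} (T : PhyloTree X) (w : T.V) (S₁ S₂ : Set L) : Prop :=
  ∀ x ∈ S₁ ∩ X, ∀ y ∈ S₂ ∩ X,
    ∀ p : T.G.Walk (T.leaf x) (T.leaf y), p.IsPath → w ∈ p.support

/-- Deleting edge `e` separates `S₁` from `S₂`: every path between a leaf of `S₁`
and a leaf of `S₂` uses `e`. -/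
def edgeSep {L : Type} {X : Set L} (T : PhyloTree X) (e : Sym2 T.V) (S₁ S₂ : Set L) : Prop :=
  ∀ x ∈ S₁ ∩ X, ∀ y ∈ S₂ ∩ X,
    ∀ p : T.G.Walk (T.leaf x) (T.leaf y), p.IsPath → e ∈ p.edges

/-- An internal vertex of `T`. -/
def Internal {L : Type} {X : Set L} (T : PhyloTree X) (w : T.V) : Prop :=
  ¬ IsLeafVert T.G w

/-- `T` displays the generalized quartet S₁|S₂ ‖ S₃|S₄: there are internal vertices u, v
such that deleting any edge on the u–v path separates S₁ ∪ S₂ from S₃ ∪ S₄,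
deleting u separates S₁ from S₂, and deleting v separates S₃ from S₄. -/
def displaysQuartet {L : Type} {X : Set L} (T : PhyloTree X) (S₁ S₂ S₃ S₄ : Set L) : Prop :=
  ∃ u v : T.V, Internal T u ∧ Internal T v ∧
    ∃ p : T.G.Walk u v, p.IsPath ∧
      (∀ e ∈ p.edges, edgeSep T e (S₁ ∪ S₂) (S₃ ∪ S₄)) ∧
      vertexSep T u S₁ S₂ ∧ vertexSep T v S₃ S₄

end PP

/-!
Since `T` displays `χ₃`, the paths `a₃–a₄` and `b₃–b₄` are disjoint, so the median `u` of
`a₃, a₄, b₃` and the median `v` of `a₃, b₃, b₄` are internal vertices lying on every path from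
`{a₃, a₄}` to `{b₃, b₄}`. By `Ω_A`, and by `χ₄` and `φ₃` joined at `a₅`, no path from `a₁` to
another leaf of `X_{≤2}` meets `u` or `v`, so `X_{≤2}` lies in a single branch of `T` at `u` and
in a single branch at `v`. The character `χ₂`, which makes the paths `a₂–a₃` and `b₂–b₃`
disjoint, then excludes the branches of `a₄` and `b₃` at `u` and the branch of `b₄` at `v`.
-/

namespace SimpleGraph.IsTree

variable {V : Type*} {G : SimpleGraph V} (hG : G.IsTree) {u v w x y z : V}

noncomputable def path (x y : V) : G.Walk x y :=
  (hG.existsUnique_path x y).exists.choose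

theorem isPath_path (x y : V) : (hG.path x y).IsPath :=
  (hG.existsUnique_path x y).exists.choose_spec

theorem eq_path {p : G.Walk x y} (hp : p.IsPath) : p = hG.path x y :=
  (hG.existsUnique_path x y).unique hp (hG.isPath_path x y)

theorem path_reverse (x y : V) : (hG.path x y).reverse = hG.path y x :=
  hG.eq_path (hG.isPath_path x y).reverse

def segment (x y : V) : Set V := {w | w ∈ (hG.path x y).support}

theorem left_mem_segment (x y : V) : x ∈ hG.segment x y := (hG.path x y).start_mem_support

theorem right_mem_segment (x y : V) : y ∈ hG.segment x y := (hG.path x y).end_mem_support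

theorem segment_comm (x y : V) : hG.segment x y = hG.segment y x := by
  ext w
  show w ∈ (hG.path x y).support ↔ w ∈ (hG.path y x).support
  rw [← hG.path_reverse y x, Walk.support_reverse, List.mem_reverse]

theorem path_eq_append (h : w ∈ hG.segment x y) :
    hG.path x y = (hG.path x w).append (hG.path w y) := by
  classical
  have h' : w ∈ (hG.path x y).support := h
  rw [← hG.eq_path ((hG.isPath_path x y).takeUntil h'),
    ← hG.eq_path ((hG.isPath_path x y).dropUntil h'), Walk.take_spec]

theorem segment_subset_left (h : w ∈ hG.segment x y) : hG.segment x w ⊆ hG.segment x y :=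
  fun z hz => by
    show z ∈ (hG.path x y).support
    rw [hG.path_eq_append h, Walk.mem_support_append_iff]
    exact Or.inl hz

theorem segment_subset_right (h : w ∈ hG.segment x y) : hG.segment w y ⊆ hG.segment x y :=
  fun z hz => by
    show z ∈ (hG.path x y).support
    rw [hG.path_eq_append h, Walk.mem_support_append_iff]
    exact Or.inr hz

/-- The path from `x` to `y` is obtained by shortcutting the walk through `z`. -/
theorem segment_subset_union (z : V) : hG.segment x y ⊆ hG.segment x z ∪ hG.segment z y := by
  classical
  intro w hw
  let p := (hG.path x z).append (hG.path z y)
  change w ∈ (hG.path x y).support at hw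
  rw [← hG.eq_path p.bypass_isPath] at hw
  exact (Walk.mem_support_append_iff _ _).mp (p.support_bypass_subset_support hw)

theorem mem_segment_of_notMem_left (h : w ∈ hG.segment x y) (hz : w ∉ hG.segment x z) :
    w ∈ hG.segment z y :=
  (hG.segment_subset_union z h).resolve_left hz

theorem mem_segment_of_notMem_right (h : w ∈ hG.segment x y) (hz : w ∉ hG.segment z y) :
    w ∈ hG.segment x z :=
  (hG.segment_subset_union z h).resolve_right hz

theorem eq_of_mem_segment_of_mem_segment (h : w ∈ hG.segment x y) (hx : z ∈ hG.segment x w)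
    (hy : z ∈ hG.segment w y) : z = w := by
  by_contra hzw
  have hnd := (hG.isPath_path x y).support_nodup
  rw [hG.path_eq_append h, Walk.support_append, List.nodup_append] at hnd
  change z ∈ (hG.path w y).support at hy
  rw [← Walk.cons_tail_support, List.mem_cons] at hy
  exact hnd.2.2 z hx z (hy.resolve_left hzw) rfl

theorem mem_segment_or_mem_segment_of_disjoint {x' y' t : V}
    (hd : Disjoint (hG.segment x x') (hG.segment y y')) (hx : w ∈ hG.segment x' t)
    (hy : w ∈ hG.segment y' t) : w ∈ hG.segment x t ∨ w ∈ hG.segment y t := by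
  by_contra! h
  have hx' := hG.mem_segment_of_notMem_right hx h.1
  have hy' := hG.mem_segment_of_notMem_right hy h.2
  rw [hG.segment_comm] at hx' hy'
  exact hd.ne_of_mem hx' hy' rfl

theorem edges_path_subset_of_mem_right (hu : u ∈ hG.segment x y) (hv : v ∈ hG.segment u y) :
    (hG.path u v).edges ⊆ (hG.path x y).edges := by
  rw [hG.path_eq_append hu, hG.path_eq_append hv, Walk.edges_append, Walk.edges_append]
  exact fun e he => List.mem_append_right _ (List.mem_append_left _ he)

theorem edges_path_subset (hu : u ∈ hG.segment x y) (hv : v ∈ hG.segment x y) :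
    (hG.path u v).edges ⊆ (hG.path x y).edges := by
  rcases hG.segment_subset_union u hv with hv | hv
  · rw [hG.segment_comm] at hu hv
    intro e he
    have := hG.edges_path_subset_of_mem_right hu hv he
    rwa [← hG.path_reverse, Walk.edges_reverse, List.mem_reverse] at this
  · exact hG.edges_path_subset_of_mem_right hu hv

def IsMedian (m x y z : V) : Prop :=
  m ∈ hG.segment x y ∧ m ∈ hG.segment x z ∧ m ∈ hG.segment y z

/-- The median is where the path from `y` to `z` leaves the path from `x` to `y`. -/
theorem exists_isMedian (x y z : V) : ∃ m, hG.IsMedian m x y z := by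
  by_cases hz : z ∈ hG.segment x y
  · exact ⟨z, hz, hG.right_mem_segment x z, hG.right_mem_segment y z⟩
  obtain ⟨d, hd, hd₁, hd₂⟩ :=
    (hG.path y z).exists_boundary_dart (hG.segment x y) (hG.right_mem_segment x y) hz
  have hd₂z : d.snd ∈ hG.segment x z := by
    refine hG.mem_segment_of_notMem_left (x := y) ?_ (by rwa [hG.segment_comm] at hd₂)
    exact (hG.path y z).dart_snd_mem_support_of_mem_darts hd
  have hd₁z : d.fst ∈ hG.segment x d.snd :=
    hG.isAcyclic.mem_support_of_ne_mem_support_of_adj_of_isPath (hG.isPath_path _ _)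
      (hG.isPath_path _ _) d.adj.symm fun h => hd₂ (hG.segment_subset_left hd₁ h)
  exact ⟨d.fst, hd₁, hG.segment_subset_left hd₂z hd₁z,
    (hG.path y z).dart_fst_mem_support_of_mem_darts hd⟩

end SimpleGraph.IsTree

namespace PP

open SimpleGraph

section Trees

variable {V : Type} {G : SimpleGraph V} (hG : G.IsTree) {m w x y z : V}

theorem not_isLeafVert_of_mem_segment (h : w ∈ hG.segment x y) (hx : w ≠ x) (hy : w ≠ y) :
    ¬ IsLeafVert G w := by
  intro hl
  have hnx : ¬ (hG.path w x).Nil := Walk.not_nil_of_ne hx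
  have hny : ¬ (hG.path w y).Nil := Walk.not_nil_of_ne hy
  have hs : (hG.path w x).snd = (hG.path w y).snd :=
    hl _ _ (Walk.adj_snd hnx) (Walk.adj_snd hny)
  have hsx : (hG.path w x).snd ∈ hG.segment x w := by
    rw [hG.segment_comm]; exact Walk.getVert_mem_support _ 1
  have hsy : (hG.path w x).snd ∈ hG.segment w y := hs ▸ Walk.getVert_mem_support _ 1
  exact (Walk.adj_snd hnx).ne (hG.eq_of_mem_segment_of_mem_segment h hsx hsy).symm

theorem not_isLeafVert_of_isMedian (hm : hG.IsMedian m x y z) (hxy : x ≠ y) (hxz : x ≠ z)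
    (hyz : y ≠ z) : ¬ IsLeafVert G m := by
  by_cases hmx : m = x
  · subst hmx; exact not_isLeafVert_of_mem_segment hG hm.2.2 hxy hxz
  by_cases hmy : m = y
  · subst hmy; exact not_isLeafVert_of_mem_segment hG hm.2.1 hmx hyz
  exact not_isLeafVert_of_mem_segment hG hm.1 hmx hmy

end Trees

section PhyloTrees

variable {L : Type} {X : Set L} (T : PhyloTree X)

theorem segment_subset_subtree {S : Set L} {x y : L} (hx : x ∈ S ∩ X) (hy : y ∈ S ∩ X) :
    T.isTree.segment (T.leaf x) (T.leaf y) ⊆ subtree T S :=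
  fun _ hw => ⟨x, hx, y, hy, _, T.isTree.isPath_path _ _, hw⟩

theorem displays.disjoint_segment {χ : L → ℕ} (hχ : displays T χ) {x y z w : L} (hx : x ∈ X)
    (hy : y ∈ X) (hz : z ∈ X) (hw : w ∈ X) (hxy : χ x = χ y) (hzw : χ z = χ w)
    (hxz : χ x ≠ χ z) :
    Disjoint (T.isTree.segment (T.leaf x) (T.leaf y)) (T.isTree.segment (T.leaf z) (T.leaf w)) :=
  (hχ _ _ hxz).mono (segment_subset_subtree T (S := {l | χ l = χ x}) ⟨rfl, hx⟩ ⟨hxy.symm, hy⟩)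
    (segment_subset_subtree T (S := {l | χ l = χ z}) ⟨rfl, hz⟩ ⟨hzw.symm, hw⟩)

theorem displaysQuartet_of_mem_segment {S₁ S₂ S₃ S₄ : Set L} {u v : T.V} (hu : Internal T u)
    (hv : Internal T v)
    (huv : ∀ x ∈ (S₁ ∪ S₂) ∩ X, ∀ y ∈ (S₃ ∪ S₄) ∩ X,
      u ∈ T.isTree.segment (T.leaf x) (T.leaf y) ∧ v ∈ T.isTree.segment (T.leaf x) (T.leaf y))
    (hu₁₂ : ∀ x ∈ S₁ ∩ X, ∀ y ∈ S₂ ∩ X, u ∈ T.isTree.segment (T.leaf x) (T.leaf y))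
    (hv₃₄ : ∀ x ∈ S₃ ∩ X, ∀ y ∈ S₄ ∩ X, v ∈ T.isTree.segment (T.leaf x) (T.leaf y)) :
    displaysQuartet T S₁ S₂ S₃ S₄ := by
  refine ⟨u, v, hu, hv, _, T.isTree.isPath_path u v, ?_, ?_, ?_⟩
  · intro e he x hx y hy p hp
    rw [T.isTree.eq_path hp]
    exact T.isTree.edges_path_subset (huv x hx y hy).1 (huv x hx y hy).2 he
  · intro x hx y hy p hp
    rw [T.isTree.eq_path hp]
    exact hu₁₂ x hx y hy
  · intro x hx y hy p hp
    rw [T.isTree.eq_path hp]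
    exact hv₃₄ x hx y hy

end PhyloTrees

theorem XLE_two_subset : XLE 2 ⊆ {a 1, b 1, a 2, b 2} := by
  rintro ⟨s, i⟩ ⟨h1, h2⟩
  interval_cases i <;> cases s <;> simp [a, b]

section BaseCase

variable {V : Type} {G : SimpleGraph V} {hG : G.IsTree} {ℓ : Lbl → V}

local notation "⟪" x ", " y "⟫" => SimpleGraph.IsTree.segment hG (ℓ x) (ℓ y)

variable (hG ℓ) in
structure BaseConfig : Prop where
  disjoint_a2a3_b2b3 : Disjoint ⟪a 2, a 3⟫ ⟪b 2, b 3⟫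
  disjoint_a3a4_b3b4 : Disjoint ⟪a 3, a 4⟫ ⟪b 3, b 4⟫
  disjoint_a1b1_a3b3 : Disjoint ⟪a 1, b 1⟫ ⟪a 3, b 3⟫
  disjoint_a1b2_a3b3 : Disjoint ⟪a 1, b 2⟫ ⟪a 3, b 3⟫
  disjoint_a1a2_a4b3 : Disjoint ⟪a 1, a 2⟫ ⟪a 4, b 3⟫
  a3_ne_a4 : ℓ (a 3) ≠ ℓ (a 4)
  b3_ne_b4 : ℓ (b 3) ≠ ℓ (b 4)

namespace BaseConfig

variable (hc : BaseConfig hG ℓ) {u v w : V}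
include hc

theorem notMem_segment_a1_head (h3 : w ∈ ⟪a 3, b 3⟫) (h4 : w ∈ ⟪a 4, b 3⟫) :
    ∀ x ∈ XLE 2, w ∉ ⟪a 1, x⟫ := by
  intro x hx
  rcases XLE_two_subset hx with rfl | rfl | rfl | rfl
  · exact fun h => hc.disjoint_a1b1_a3b3.notMem_of_mem_right h3
      (hG.segment_subset_left (hG.left_mem_segment _ _) h)
  · exact hc.disjoint_a1b1_a3b3.notMem_of_mem_right h3
  · exact hc.disjoint_a1a2_a4b3.notMem_of_mem_right h4
  · exact hc.disjoint_a1b2_a3b3.notMem_of_mem_right h3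

theorem mem_segment_head (h3 : w ∈ ⟪a 3, b 3⟫) (h4 : w ∈ ⟪a 4, b 3⟫) {t : Lbl}
    (ht : w ∈ ⟪a 1, t⟫) : ∀ x ∈ XLE 2, w ∈ ⟪x, t⟫ :=
  fun x hx => hG.mem_segment_of_notMem_left ht (hc.notMem_segment_a1_head h3 h4 x hx)

theorem mem_segment_a1 (h3 : w ∈ ⟪a 3, b 3⟫) (h4 : w ∈ ⟪a 4, b 3⟫) {t : Lbl}
    (ha : w ∈ ⟪a 3, t⟫) (hb : w ∈ ⟪b 3, t⟫) : w ∈ ⟪a 1, t⟫ := by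
  have hhead := hc.notMem_segment_a1_head h3 h4
  rcases hG.mem_segment_or_mem_segment_of_disjoint hc.disjoint_a2a3_b2b3 ha hb with h | h
  · refine hG.mem_segment_of_notMem_left h ?_
    rw [hG.segment_comm]; exact hhead (a 2) ⟨by decide, by decide⟩
  · refine hG.mem_segment_of_notMem_left h ?_
    rw [hG.segment_comm]; exact hhead (b 2) ⟨by decide, by decide⟩

theorem mem_segment_a1_b3 (h3 : w ∈ ⟪a 3, b 3⟫) (h4 : w ∈ ⟪a 4, b 3⟫) : w ∈ ⟪a 1, b 3⟫ := by
  by_contra h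
  have hb2 : w ∉ ⟪a 1, b 2⟫ := hc.disjoint_a1b2_a3b3.notMem_of_mem_right h3
  have hb2b3 : w ∉ ⟪b 2, b 3⟫ := fun h' => h (hG.mem_segment_of_notMem_left h' (by
    rw [hG.segment_comm]; exact hb2))
  have ha3b2 : w ∈ ⟪b 2, a 3⟫ := by
    rw [hG.segment_comm]; exact hG.mem_segment_of_notMem_right h3 hb2b3
  -- `q`, where `b₂` joins the path from `w` to `b₃`, is forced onto the path `a₁–a₂`.
  obtain ⟨q, hqb2, hqb3, hqw⟩ := hG.exists_isMedian (ℓ (b 2)) w (ℓ (b 3))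
  have hqa3 : q ∈ ⟪a 3, b 3⟫ := hG.segment_subset_right h3 hqw
  have hqa4 : q ∈ ⟪a 4, b 3⟫ := hG.segment_subset_right h4 hqw
  have hqa2 : q ∈ ⟪b 2, a 2⟫ :=
    hG.mem_segment_of_notMem_right (hG.segment_subset_left ha3b2 hqb2)
      (hc.disjoint_a2a3_b2b3.notMem_of_mem_right hqb3)
  have hqa1 : q ∈ ⟪a 1, a 2⟫ := by
    refine hG.mem_segment_of_notMem_left hqa2 ?_
    rw [hG.segment_comm]; exact hc.disjoint_a1b2_a3b3.notMem_of_mem_right hqa3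
  exact hc.disjoint_a1a2_a4b3.notMem_of_mem_right hqa4 hqa1

theorem mem_segment_of_mem_cross (h33 : w ∈ ⟪a 3, b 3⟫) (h43 : w ∈ ⟪a 4, b 3⟫)
    (h34 : w ∈ ⟪a 3, b 4⟫) (h44 : w ∈ ⟪a 4, b 4⟫) (h14 : w ∈ ⟪a 1, b 4⟫) :
    ∀ x ∈ XLE 2 ∪ {a 3} ∪ {a 4}, ∀ y ∈ ({b 3} ∪ {b 4} : Set Lbl), w ∈ ⟪x, y⟫ := by
  rintro x ((hx | rfl) | rfl) y (rfl | rfl)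
  · exact hc.mem_segment_head h33 h43 (hc.mem_segment_a1_b3 h33 h43) x hx
  · exact hc.mem_segment_head h33 h43 h14 x hx
  · exact h33
  · exact h34
  · exact h43
  · exact h44

theorem not_isLeafVert_of_isMedian_a3_a4_b3 (hu : hG.IsMedian u (ℓ (a 3)) (ℓ (a 4)) (ℓ (b 3))) :
    ¬ IsLeafVert G u :=
  not_isLeafVert_of_isMedian hG hu hc.a3_ne_a4
    (hc.disjoint_a3a4_b3b4.ne_of_mem (hG.left_mem_segment _ _) (hG.left_mem_segment _ _))
    (hc.disjoint_a3a4_b3b4.ne_of_mem (hG.right_mem_segment _ _) (hG.left_mem_segment _ _))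

theorem not_isLeafVert_of_isMedian_a3_b3_b4 (hv : hG.IsMedian v (ℓ (a 3)) (ℓ (b 3)) (ℓ (b 4))) :
    ¬ IsLeafVert G v :=
  not_isLeafVert_of_isMedian hG hv
    (hc.disjoint_a3a4_b3b4.ne_of_mem (hG.left_mem_segment _ _) (hG.left_mem_segment _ _))
    (hc.disjoint_a3a4_b3b4.ne_of_mem (hG.left_mem_segment _ _) (hG.right_mem_segment _ _))
    hc.b3_ne_b4

theorem mem_segment_a4_of_isMedian (hu : hG.IsMedian u (ℓ (a 3)) (ℓ (a 4)) (ℓ (b 3))) :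
    ∀ x ∈ XLE 2 ∪ {a 3}, u ∈ ⟪x, a 4⟫ := by
  have h43 : u ∈ ⟪a 4, b 3⟫ := hu.2.2
  rintro x (hx | rfl)
  · refine hc.mem_segment_head hu.2.1 h43 ?_ x hx
    exact hc.mem_segment_a1 hu.2.1 h43 hu.1 (by rw [hG.segment_comm]; exact h43)
  · exact hu.1

theorem mem_segment_of_isMedian_a3_a4_b3 (hu : hG.IsMedian u (ℓ (a 3)) (ℓ (a 4)) (ℓ (b 3))) :
    ∀ x ∈ XLE 2 ∪ {a 3} ∪ {a 4}, ∀ y ∈ ({b 3} ∪ {b 4} : Set Lbl), u ∈ ⟪x, y⟫ := by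
  have hb : u ∉ ⟪b 4, b 3⟫ := by
    rw [hG.segment_comm]; exact hc.disjoint_a3a4_b3b4.notMem_of_mem_left hu.1
  refine hc.mem_segment_of_mem_cross hu.2.1 hu.2.2 (hG.mem_segment_of_notMem_right hu.2.1 hb)
    (hG.mem_segment_of_notMem_right hu.2.2 hb) ?_
  exact hG.mem_segment_of_notMem_right (hc.mem_segment_a1_b3 hu.2.1 hu.2.2) hb

theorem mem_segment_of_isMedian_a3_b3_b4 (hv : hG.IsMedian v (ℓ (a 3)) (ℓ (b 3)) (ℓ (b 4))) :
    ∀ x ∈ XLE 2 ∪ {a 3} ∪ {a 4}, ∀ y ∈ ({b 3} ∪ {b 4} : Set Lbl), v ∈ ⟪x, y⟫ := by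
  have ha : v ∉ ⟪a 3, a 4⟫ := hc.disjoint_a3a4_b3b4.notMem_of_mem_right hv.2.2
  have h43 := hG.mem_segment_of_notMem_left hv.1 ha
  refine hc.mem_segment_of_mem_cross hv.1 h43 hv.2.1 (hG.mem_segment_of_notMem_left hv.2.1 ha) ?_
  exact hc.mem_segment_a1 hv.1 h43 hv.2.1 hv.2.2

end BaseConfig

end BaseCase

theorem baseConfig_of_displays {n : ℕ} (hn : 5 ≤ n) {T : PhyloTree (Xset n)}
    (hOA : displays T OmA) (h2 : displays T (chi 2)) (hp3 : displays T (phi 3))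
    (h3 : displays T (chi 3)) (h4 : displays T (chi 4)) : BaseConfig T.isTree T.leaf := by
  have hX : ∀ p : Lbl, 1 ≤ p.2 ∧ p.2 ≤ 5 → p ∈ Xset n := fun p h => ⟨h.1, h.2.trans hn⟩
  have disj : ∀ {χ : Lbl → ℕ}, displays T χ → ∀ {x y z w : Lbl},
      (∀ p ∈ [x, y, z, w], 1 ≤ p.2 ∧ p.2 ≤ 5) → χ x = χ y → χ z = χ w → χ x ≠ χ z →
      Disjoint (T.isTree.segment (T.leaf x) (T.leaf y))
        (T.isTree.segment (T.leaf z) (T.leaf w)) :=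
    fun hχ _ _ _ _ hp => hχ.disjoint_segment T (hX _ (hp _ (by simp))) (hX _ (hp _ (by simp)))
      (hX _ (hp _ (by simp))) (hX _ (hp _ (by simp)))
  have hinj : ∀ {x y : Lbl}, 1 ≤ x.2 ∧ x.2 ≤ 5 → 1 ≤ y.2 ∧ y.2 ≤ 5 → x ≠ y →
      T.leaf x ≠ T.leaf y :=
    fun hx hy hxy h => hxy (T.leaf_injOn (hX _ hx) (hX _ hy) h)
  refine ⟨disj h2 (by decide) (by decide) (by decide) (by decide),
    disj h3 (by decide) (by decide) (by decide) (by decide),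
    disj hOA (by decide) (by decide) (by decide) (by decide),
    disj hOA (by decide) (by decide) (by decide) (by decide), ?_,
    hinj (by decide) (by decide) (by decide), hinj (by decide) (by decide) (by decide)⟩
  refine Disjoint.mono_right (T.isTree.segment_subset_union (T.leaf (a 5)))
    (Set.disjoint_union_right.mpr ⟨?_, ?_⟩)
  · exact disj h4 (by decide) (by decide) (by decide) (by decide)
  · exact disj hp3 (by decide) (by decide) (by decide) (by decide)

theorem incompatible_base_case_general (n : ℕ) (hn6 : 6 ≤ n)
    (T : PhyloTree (Xset n))
    (hOA : displays T OmA) (h2 : displays T (chi 2)) (hp3 : displays T (phi 3))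
    (h3 : displays T (chi 3)) (h4 : displays T (chi 4)) :
    displaysQuartet T (XLE 2 ∪ {a 3}) {a 4} {b 3} {b 4} := by
  have hc := baseConfig_of_displays (by omega) hOA h2 hp3 h3 h4
  obtain ⟨u, hu⟩ := T.isTree.exists_isMedian (T.leaf (a 3)) (T.leaf (a 4)) (T.leaf (b 3))
  obtain ⟨v, hv⟩ := T.isTree.exists_isMedian (T.leaf (a 3)) (T.leaf (b 3)) (T.leaf (b 4))
  refine displaysQuartet_of_mem_segment T (hc.not_isLeafVert_of_isMedian_a3_a4_b3 hu)
    (hc.not_isLeafVert_of_isMedian_a3_b3_b4 hv) (fun x hx y hy =>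
      ⟨hc.mem_segment_of_isMedian_a3_a4_b3 hu x hx.1 y hy.1,
        hc.mem_segment_of_isMedian_a3_b3_b4 hv x hx.1 y hy.1⟩) ?_ ?_
  · rintro x hx _ ⟨rfl, -⟩
    exact hc.mem_segment_a4_of_isMedian hu x hx.1
  · rintro _ ⟨rfl, -⟩ _ ⟨rfl, -⟩
    exact hv.2.2

theorem incompatible_base_case (n : ℕ) (hn : Even n) (hn6 : 6 ≤ n)
    (T : PhyloTree (Xset n))
    (hOA : displays T OmA) (h2 : displays T (chi 2)) (hp3 : displays T (phi 3))
    (h3 : displays T (chi 3)) (h4 : displays T (chi 4)) :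
    displaysQuartet T (XLE 2 ∪ {a 3}) {a 4} {b 3} {b 4} :=
  incompatible_base_case_general n hn6 T hOA h2 hp3 h3 h4

end PP
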